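/- arXiv:2110.07851 — 3 statements merged into one kernel-verified Lean document; each statement's English description precedes it below -/
import Mathlib

section
/- Under model y = Xβ + ε (E(ε)=0, Var(ε)=σ²I) and stochastic restriction r = Rβ + e with E(e)=0, Var(e)=σ²Ω, e independent of ε, the stochastic restricted Liu estimator β̂_SRL = β̂_LT1 + vS⁻¹Rᵀ(Ω + vRS⁻¹Rᵀ)⁻¹(r − R β̂_LT1), where β̂_LT1 = (S+I)⁻¹(S+dI)β̂_LS, satisfies E(β̂_SRL) = β + A(F_d − I)Sβ with A = (S + vRᵀΩ⁻¹R)⁻¹ and F_d = (S+I)⁻¹(S+dI). -/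
open MeasureTheory Matrix

/-- Componentwise mean of a random vector. -/
noncomputable def vmean {Ω : Type*} [MeasurableSpace Ω] (μ : Measure Ω) {n : Type*}
    (f : Ω → n → ℝ) : n → ℝ := fun i => ∫ ω, f ω i ∂μ

/-- Covariance matrix of a random vector. -/
noncomputable def vcov {Ω : Type*} [MeasurableSpace Ω] (μ : Measure Ω) {n : Type*}
    (f : Ω → n → ℝ) : Matrix n n ℝ :=
  Matrix.of fun i j => ∫ ω, (f ω i - vmean μ f i) * (f ω j - vmean μ f j) ∂μ

/-!
The estimator is an affine function `c + M ε + K e` of the two noise vectors, so its mean is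
`c = (F_d + v G R (I - F_d)) β` with `G = S⁻¹ Rᵀ B⁻¹`, `B = Ω + v R S⁻¹ Rᵀ`. The Woodbury-type
identity `(S + v Rᵀ Ω⁻¹ R)⁻¹ = S⁻¹ - v G R S⁻¹`, i.e. `A S = I - v G R`, together with the fact
that `S` commutes with `F_d`, rewrites `c` as `β + A (F_d - I) S β`.
-/
theorem Commute.ringInverse_right {M₀ : Type*} [MonoidWithZero M₀] {a b : M₀}
    (h : Commute a b) : Commute a (Ring.inverse b) := by
  by_cases hb : IsUnit b
  · obtain ⟨u, rfl⟩ := hb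
    rw [Ring.inverse_unit]
    exact h.units_inv_right
  · rw [Ring.inverse_non_unit _ hb]
    exact Commute.zero_right a

theorem Commute.nonsing_inv_right {n K : Type*} [Fintype n] [DecidableEq n] [CommRing K]
    {A B : Matrix n n K} (h : Commute A B) : Commute A B⁻¹ := by
  rw [nonsing_inv_eq_ringInverse]
  exact h.ringInverse_right

namespace Matrix

variable {K : Type*} [CommRing K] {m n : Type*} [Fintype m] [Fintype n] [DecidableEq m]
  [DecidableEq n]

/-- Unlike `Matrix.add_mul_mul_inv_eq_sub` with `C = v • Ω⁻¹`, this form allows `v = 0` and does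
not assume that the left-hand side is invertible. -/
theorem add_smul_mul_inv_mul_inv_eq_sub (S : Matrix n n K) (U : Matrix n m K)
    (Ω : Matrix m m K) (V : Matrix m n K) (v : K) (hS : IsUnit S.det) (hΩ : IsUnit Ω.det)
    (hB : IsUnit (Ω + v • (V * S⁻¹ * U)).det) :
    (S + v • (U * Ω⁻¹ * V))⁻¹ = S⁻¹ - v • (S⁻¹ * U * (Ω + v • (V * S⁻¹ * U))⁻¹ * V * S⁻¹) := by
  set B := Ω + v • (V * S⁻¹ * U)
  have hinv : Ω⁻¹ - B⁻¹ = Ω⁻¹ * (v • (V * S⁻¹ * U)) * B⁻¹ := by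
    rw [inv_sub_inv (iff_of_true ((isUnit_iff_isUnit_det _).mpr hΩ)
      ((isUnit_iff_isUnit_det _).mpr hB)), add_sub_cancel_left]
  apply inv_eq_right_inv
  calc (S + v • (U * Ω⁻¹ * V)) * (S⁻¹ - v • (S⁻¹ * U * B⁻¹ * V * S⁻¹))
      = 1 + v • (U * (Ω⁻¹ - B⁻¹ - Ω⁻¹ * (v • (V * S⁻¹ * U)) * B⁻¹) * V * S⁻¹) := by
        simp only [Matrix.add_mul, Matrix.mul_sub, Matrix.sub_mul, Matrix.smul_mul,
          Matrix.mul_smul, Matrix.mul_assoc, mul_nonsing_inv _ hS,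
          mul_nonsing_inv_cancel_left _ _ hS]
        module
    _ = 1 := by
        rw [hinv, sub_self, Matrix.mul_zero, Matrix.zero_mul, Matrix.zero_mul, smul_zero, add_zero]

end Matrix

section Mean

variable {Ω : Type*} [MeasurableSpace Ω] {μ : Measure Ω} {m n : Type*}

lemma vmean_add {f g : Ω → n → ℝ} (hf : ∀ i, Integrable (f · i) μ)
    (hg : ∀ i, Integrable (g · i) μ) :
    vmean μ (fun ω => f ω + g ω) = vmean μ f + vmean μ g :=
  funext fun i => integral_add (hf i) (hg i)

lemma vmean_const [IsProbabilityMeasure μ] (c : n → ℝ) : vmean μ (fun _ => c) = c :=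
  funext fun i => by simp [vmean]

variable [Fintype n]

lemma integrable_mulVec_apply (M : Matrix m n ℝ) {f : Ω → n → ℝ}
    (hf : ∀ i, Integrable (f · i) μ) (i : m) : Integrable (fun ω => (M *ᵥ f ω) i) μ :=
  integrable_finsetSum _ fun j _ => (hf j).const_mul _

lemma vmean_mulVec (M : Matrix m n ℝ) {f : Ω → n → ℝ} (hf : ∀ i, Integrable (f · i) μ) :
    vmean μ (fun ω => M *ᵥ f ω) = M *ᵥ vmean μ f := by
  funext i
  simp only [vmean, mulVec, dotProduct]
  rw [integral_finsetSum _ fun j _ => (hf j).const_mul _]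
  simp only [integral_const_mul]

lemma vmean_add_mulVec_add_mulVec [IsProbabilityMeasure μ] {k : Type*} [Fintype k]
    (c : m → ℝ) (M : Matrix m n ℝ) (K : Matrix m k ℝ) {f : Ω → n → ℝ} {g : Ω → k → ℝ}
    (hf : ∀ i, Integrable (f · i) μ) (hg : ∀ i, Integrable (g · i) μ) :
    vmean μ (fun ω => c + M *ᵥ f ω + K *ᵥ g ω) = c + M *ᵥ vmean μ f + K *ᵥ vmean μ g := by
  rw [vmean_add (f := fun ω => c + M *ᵥ f ω)
    (fun i => (integrable_const (c i)).add (integrable_mulVec_apply M hf i))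
    (integrable_mulVec_apply K hg), vmean_add (fun i => integrable_const (c i))
    (integrable_mulVec_apply M hf), vmean_const, vmean_mulVec M hf, vmean_mulVec K hg]

end Mean

theorem stmt8_general {N p j : ℕ} {Ω : Type*} [MeasurableSpace Ω] (μ : Measure Ω) [IsProbabilityMeasure μ]
    (X : Matrix (Fin N) (Fin p) ℝ) (R : Matrix (Fin j) (Fin p) ℝ)
    (Om : Matrix (Fin j) (Fin j) ℝ) (β : Fin p → ℝ) (v d : ℝ)
    (hOm : Om.PosDef)
    (ε : Ω → Fin N → ℝ) (e : Ω → Fin j → ℝ)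
    (hεint : ∀ i, MemLp (fun ω => ε ω i) 2 μ) (heint : ∀ i, MemLp (fun ω => e ω i) 2 μ)
    (hεmean : vmean μ ε = 0) (hemean : vmean μ e = 0)
    (S : Matrix (Fin p) (Fin p) ℝ) (hS : S = Xᵀ * X) (hSinv : IsUnit S.det)
    (hBinv : IsUnit (Om + v • (R * S⁻¹ * Rᵀ)).det)
    (y : Ω → Fin N → ℝ) (hy : ∀ ω, y ω = X.mulVec β + ε ω)
    (r : Ω → Fin j → ℝ) (hr : ∀ ω, r ω = R.mulVec β + e ω)
    (βLS : Ω → Fin p → ℝ) (hβLS : ∀ ω, βLS ω = (S⁻¹ * Xᵀ).mulVec (y ω))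
    (Fd : Matrix (Fin p) (Fin p) ℝ)
    (hFd : Fd = (S + 1)⁻¹ * (S + d • (1 : Matrix (Fin p) (Fin p) ℝ)))
    (βLT1 : Ω → Fin p → ℝ) (hLT1 : ∀ ω, βLT1 ω = Fd.mulVec (βLS ω))
    (βSRL : Ω → Fin p → ℝ)
    (hSRL : ∀ ω, βSRL ω = βLT1 ω +
      v • (S⁻¹ * Rᵀ * (Om + v • (R * S⁻¹ * Rᵀ))⁻¹).mulVec (r ω - R.mulVec (βLT1 ω)))
    (A : Matrix (Fin p) (Fin p) ℝ) (hA : A = (S + v • (Rᵀ * Om⁻¹ * R))⁻¹) :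
    vmean μ βSRL = β + (A * (Fd - 1) * S).mulVec β := by
  have hOmU : IsUnit Om.det := (isUnit_iff_isUnit_det Om).mp hOm.isUnit
  set G := S⁻¹ * Rᵀ * (Om + v • (R * S⁻¹ * Rᵀ))⁻¹
  have hAS : A * S = 1 - v • (G * R) := by
    rw [hA, add_smul_mul_inv_mul_inv_eq_sub S Rᵀ Om R v hSinv hOmU hBinv, Matrix.sub_mul,
      Matrix.smul_mul, nonsing_inv_mul _ hSinv, Matrix.mul_assoc _ S⁻¹ S, nonsing_inv_mul _ hSinv,
      Matrix.mul_one]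
  have hSFd : Commute S Fd := hFd ▸
    ((Commute.refl S).add_right (Commute.one_right S)).nonsing_inv_right.mul_right
      ((Commute.refl S).add_right ((Commute.one_right S).smul_right d))
  have hLS : ∀ ω, βLS ω = β + (S⁻¹ * Xᵀ) *ᵥ ε ω := fun ω => by
    rw [hβLS, hy, mulVec_add, mulVec_mulVec, Matrix.mul_assoc, ← hS, nonsing_inv_mul _ hSinv,
      one_mulVec]
  have hdecomp : βSRL = fun ω => (Fd + v • (G * R * (1 - Fd))) *ᵥ β +
      ((Fd - v • (G * R * Fd)) * (S⁻¹ * Xᵀ)) *ᵥ ε ω + (v • G) *ᵥ e ω := by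
    funext ω
    rw [hSRL, hLT1, hLS, hr]
    simp only [mulVec_add, mulVec_sub, add_mulVec, sub_mulVec, smul_mulVec, ← mulVec_mulVec,
      Matrix.mul_sub, Matrix.mul_one, smul_sub, smul_add]
    module
  have hbias : Fd + v • (G * R * (1 - Fd)) = 1 + A * (Fd - 1) * S := by
    rw [Matrix.mul_assoc A, ← (hSFd.sub_right (Commute.one_right S)).eq, ← Matrix.mul_assoc, hAS]
    simp only [Matrix.sub_mul, Matrix.mul_sub, Matrix.smul_mul, Matrix.one_mul, Matrix.mul_one]
    module
  rw [hdecomp, vmean_add_mulVec_add_mulVec _ _ _ (fun i => (hεint i).integrable one_le_two)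
    (fun i => (heint i).integrable one_le_two), hεmean, hemean, mulVec_zero, mulVec_zero,
    add_zero, add_zero, hbias, add_mulVec, one_mulVec]

theorem stmt8 {N p j : ℕ} {Ω : Type*} [MeasurableSpace Ω] (μ : Measure Ω) [IsProbabilityMeasure μ]
    (X : Matrix (Fin N) (Fin p) ℝ) (R : Matrix (Fin j) (Fin p) ℝ)
    (Om : Matrix (Fin j) (Fin j) ℝ) (β : Fin p → ℝ) (σ v d : ℝ)
    (hv : 0 < v) (hOm : Om.PosDef)
    (ε : Ω → Fin N → ℝ) (e : Ω → Fin j → ℝ)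
    (hεint : ∀ i, MemLp (fun ω => ε ω i) 2 μ) (heint : ∀ i, MemLp (fun ω => e ω i) 2 μ)
    (hεmean : vmean μ ε = 0) (hεcov : vcov μ ε = σ ^ 2 • (1 : Matrix (Fin N) (Fin N) ℝ))
    (hemean : vmean μ e = 0) (hecov : vcov μ e = σ ^ 2 • Om)
    (hindep : ProbabilityTheory.IndepFun ε e μ)
    (S : Matrix (Fin p) (Fin p) ℝ) (hS : S = Xᵀ * X) (hSinv : IsUnit S.det)
    (hS1 : IsUnit (S + 1).det)
    (hAinv : IsUnit (S + v • (Rᵀ * Om⁻¹ * R)).det)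
    (hBinv : IsUnit (Om + v • (R * S⁻¹ * Rᵀ)).det)
    (y : Ω → Fin N → ℝ) (hy : ∀ ω, y ω = X.mulVec β + ε ω)
    (r : Ω → Fin j → ℝ) (hr : ∀ ω, r ω = R.mulVec β + e ω)
    (βLS : Ω → Fin p → ℝ) (hβLS : ∀ ω, βLS ω = (S⁻¹ * Xᵀ).mulVec (y ω))
    (Fd : Matrix (Fin p) (Fin p) ℝ)
    (hFd : Fd = (S + 1)⁻¹ * (S + d • (1 : Matrix (Fin p) (Fin p) ℝ)))
    (βLT1 : Ω → Fin p → ℝ) (hLT1 : ∀ ω, βLT1 ω = Fd.mulVec (βLS ω))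
    (βSRL : Ω → Fin p → ℝ)
    (hSRL : ∀ ω, βSRL ω = βLT1 ω +
      v • (S⁻¹ * Rᵀ * (Om + v • (R * S⁻¹ * Rᵀ))⁻¹).mulVec (r ω - R.mulVec (βLT1 ω)))
    (A : Matrix (Fin p) (Fin p) ℝ) (hA : A = (S + v • (Rᵀ * Om⁻¹ * R))⁻¹) :
    vmean μ βSRL = β + (A * (Fd - 1) * S).mulVec β :=
  stmt8_general μ X R Om β v d hOm ε e hεint heint hεmean hemean S hS hSinv hBinv y hy r hr βLS hβLS
    Fd hFd βLT1 hLT1 βSRL hSRL A hA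
end

section
/- Under the same assumptions, the covariance of the stochastic restricted Liu estimator is Var(β̂_SRL) = σ²A(F_d S F_dᵀ + v²RᵀΩ⁻¹R)A, with A = (S + vRᵀΩ⁻¹R)⁻¹ and F_d = (S+I)⁻¹(S+dI). -/
open MeasureTheory Matrix

/-!
The estimator is affine in the two independent noise vectors:
`β̂_SRL = c + (A F_d Xᵀ) ε + (v A Rᵀ Ω⁻¹) e`.
The coefficient of `e` is the push-through identity `S⁻¹Rᵀ(Ω + v R S⁻¹ Rᵀ)⁻¹ = A Rᵀ Ω⁻¹`,
which also gives `I - v S⁻¹Rᵀ(Ω + v R S⁻¹ Rᵀ)⁻¹ R = A S`; the coefficient of `ε` then follows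
because `F_d` commutes with `S`. For independent square-integrable `ε` and `e`,
`Cov(c + Mε + Ne) = M Cov(ε) Mᵀ + N Cov(e) Nᵀ`, and substituting `Cov ε = σ² I`,
`Cov e = σ² Ω` gives the formula.
-/

open ProbabilityTheory

section Covariance

variable {Ω : Type*} [MeasurableSpace Ω] {μ : Measure Ω}

lemma vcov_apply {n : Type*} (f : Ω → n → ℝ) (i j : n) :
    vcov μ f i j = cov[fun ω => f ω i, fun ω => f ω j; μ] := rfl

lemma vcov_sumElim_of_indepFun {m k : Type*} {ε : Ω → m → ℝ} {e : Ω → k → ℝ}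
    (hε : ∀ a, MemLp (fun ω => ε ω a) 2 μ) (he : ∀ b, MemLp (fun ω => e ω b) 2 μ)
    (hindep : IndepFun ε e μ) :
    vcov μ (fun ω => Sum.elim (ε ω) (e ω)) = fromBlocks (vcov μ ε) 0 0 (vcov μ e) := by
  have hcross : ∀ a b, cov[fun ω => ε ω a, fun ω => e ω b; μ] = 0 := fun a b =>
    (hindep.comp (measurable_pi_apply a) (measurable_pi_apply b)).covariance_eq_zero (hε a) (he b)
  ext (a | a) (b | b)
  · rfl
  · exact hcross a b
  · rw [fromBlocks_apply₂₁, vcov_apply, covariance_comm]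
    exact hcross b a
  · rfl

variable [IsProbabilityMeasure μ]

lemma vcov_const_add_mulVec {m n : Type*} [Fintype m] (c : n → ℝ) (P : Matrix n m ℝ)
    {z : Ω → m → ℝ} (hz : ∀ a, MemLp (fun ω => z ω a) 2 μ) :
    vcov μ (fun ω => c + P *ᵥ z ω) = P * vcov μ z * Pᵀ := by
  have hPz : ∀ i a, MemLp (fun ω => P i a * z ω a) 2 μ := fun i a => (hz a).const_mul _
  have hsum : ∀ i, Integrable (fun ω => ∑ a, P i a * z ω a) μ := fun i =>
    (memLp_finsetSum _ fun a _ => hPz i a).integrable one_le_two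
  ext i j
  simp only [vcov_apply, Pi.add_apply, mulVec, dotProduct]
  rw [covariance_const_add_left (hsum i), covariance_const_add_right (hsum j),
    covariance_fun_sum_fun_sum (hPz i) (hPz j)]
  simp only [covariance_const_mul_left, covariance_const_mul_right, mul_apply, transpose_apply,
    Finset.sum_mul, ← vcov_apply]
  rw [Finset.sum_comm]
  exact Finset.sum_congr rfl fun a _ => Finset.sum_congr rfl fun b _ => by ring

lemma vcov_const_add_mulVec_add_mulVec_of_indepFun {n m k : Type*} [Fintype m] [Fintype k]
    (c : n → ℝ) (M : Matrix n m ℝ) (N : Matrix n k ℝ) {ε : Ω → m → ℝ} {e : Ω → k → ℝ}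
    (hε : ∀ a, MemLp (fun ω => ε ω a) 2 μ) (he : ∀ b, MemLp (fun ω => e ω b) 2 μ)
    (hindep : IndepFun ε e μ) :
    vcov μ (fun ω => c + M *ᵥ ε ω + N *ᵥ e ω) = M * vcov μ ε * Mᵀ + N * vcov μ e * Nᵀ := by
  have hz : ∀ x, MemLp (fun ω => Sum.elim (ε ω) (e ω) x) 2 μ := by
    rintro (a | b)
    exacts [hε a, he b]
  simp only [add_assoc, ← fromCols_mulVec_sumElim]
  rw [vcov_const_add_mulVec c _ hz, vcov_sumElim_of_indepFun hε he hindep, transpose_fromCols,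
    fromCols_mul_fromBlocks, fromCols_mul_fromRows]
  simp

end Covariance

namespace Matrix

lemma IsSymm.transpose_mul_mul {m n K : Type*} [Fintype m] [CommSemiring K] {Ω : Matrix m m K}
    (hΩ : Ω.IsSymm) (R : Matrix m n K) : (Rᵀ * Ω * R).IsSymm := by
  rw [IsSymm, transpose_mul, transpose_mul, transpose_transpose, hΩ.eq, Matrix.mul_assoc]

variable {n m K : Type*} [Fintype n] [DecidableEq n] [Fintype m] [DecidableEq m] [CommRing K]

lemma commute_nonsing_inv_right {A B : Matrix n n K} (h : Commute A B) : Commute A B⁻¹ := by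
  by_cases hB : IsUnit B.det
  · calc A * B⁻¹ = B⁻¹ * (B * A) * B⁻¹ := by rw [nonsing_inv_mul_cancel_left _ _ hB]
      _ = B⁻¹ * A := by rw [← h.eq, Matrix.mul_assoc, mul_nonsing_inv_cancel_right _ _ hB]
  · rw [nonsing_inv_apply_not_isUnit _ hB]
    exact Commute.zero_right A

lemma commute_inv_add_one_mul_add_smul_one (S : Matrix n n K) (d : K) :
    Commute S ((S + 1)⁻¹ * (S + d • 1)) :=
  (commute_nonsing_inv_right ((Commute.refl S).add_right (Commute.one_right S))).mul_right
    ((Commute.refl S).add_right ((Commute.one_right S).smul_right d))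

variable {S : Matrix n n K} {Ω : Matrix m m K} (U : Matrix n m K) (V : Matrix m n K) (v : K)

lemma inv_mul_mul_inv_add_smul (hS : IsUnit S.det) (hΩ : IsUnit Ω.det)
    (hA : IsUnit (S + v • (U * Ω⁻¹ * V)).det) (hB : IsUnit (Ω + v • (V * S⁻¹ * U)).det) :
    S⁻¹ * U * (Ω + v • (V * S⁻¹ * U))⁻¹ = (S + v • (U * Ω⁻¹ * V))⁻¹ * U * Ω⁻¹ := by
  have key : (S + v • (U * Ω⁻¹ * V)) * (S⁻¹ * U) = U * Ω⁻¹ * (Ω + v • (V * S⁻¹ * U)) := by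
    simp only [Matrix.add_mul, Matrix.mul_add, Matrix.smul_mul, Matrix.mul_smul, Matrix.mul_assoc,
      mul_nonsing_inv_cancel_left _ _ hS, nonsing_inv_mul _ hΩ, Matrix.mul_one]
  rw [← nonsing_inv_mul_cancel_left _ (S⁻¹ * U) hA, key, ← Matrix.mul_assoc, ← Matrix.mul_assoc,
    mul_nonsing_inv_cancel_right _ _ hB, Matrix.mul_assoc]

lemma add_smul_mulVec_sub_mulVec (hS : IsUnit S.det) (hΩ : IsUnit Ω.det)
    (hA : IsUnit (S + v • (U * Ω⁻¹ * V)).det) (hB : IsUnit (Ω + v • (V * S⁻¹ * U)).det)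
    (x : n → K) (r : m → K) :
    x + v • ((S⁻¹ * U * (Ω + v • (V * S⁻¹ * U))⁻¹) *ᵥ (r - V *ᵥ x)) =
      ((S + v • (U * Ω⁻¹ * V))⁻¹ * S) *ᵥ x + (v • ((S + v • (U * Ω⁻¹ * V))⁻¹ * U * Ω⁻¹)) *ᵥ r := by
  set A := (S + v • (U * Ω⁻¹ * V))⁻¹
  have hAS : A * S = 1 - v • (A * U * Ω⁻¹ * V) := by
    rw [eq_sub_iff_add_eq, ← nonsing_inv_mul _ hA]
    simp only [A, Matrix.mul_add, Matrix.mul_smul, Matrix.mul_assoc]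
  rw [inv_mul_mul_inv_add_smul U V v hS hΩ hA hB, hAS]
  simp only [sub_mulVec, smul_mulVec, mulVec_sub, one_mulVec, ← mulVec_mulVec, smul_sub]
  abel

end Matrix

theorem stmt9_general {N p j : ℕ} {Ω : Type*} [MeasurableSpace Ω] (μ : Measure Ω) [IsProbabilityMeasure μ]
    (X : Matrix (Fin N) (Fin p) ℝ) (R : Matrix (Fin j) (Fin p) ℝ)
    (Om : Matrix (Fin j) (Fin j) ℝ) (β : Fin p → ℝ) (σ v d : ℝ)
    (hOm : Om.PosDef)
    (ε : Ω → Fin N → ℝ) (e : Ω → Fin j → ℝ)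
    (hεint : ∀ i, MemLp (fun ω => ε ω i) 2 μ) (heint : ∀ i, MemLp (fun ω => e ω i) 2 μ)
    (hεcov : vcov μ ε = σ ^ 2 • (1 : Matrix (Fin N) (Fin N) ℝ))
    (hecov : vcov μ e = σ ^ 2 • Om)
    (hindep : ProbabilityTheory.IndepFun ε e μ)
    (S : Matrix (Fin p) (Fin p) ℝ) (hS : S = Xᵀ * X) (hSinv : IsUnit S.det)
    (hAinv : IsUnit (S + v • (Rᵀ * Om⁻¹ * R)).det)
    (hBinv : IsUnit (Om + v • (R * S⁻¹ * Rᵀ)).det)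
    (y : Ω → Fin N → ℝ) (hy : ∀ ω, y ω = X.mulVec β + ε ω)
    (r : Ω → Fin j → ℝ) (hr : ∀ ω, r ω = R.mulVec β + e ω)
    (βLS : Ω → Fin p → ℝ) (hβLS : ∀ ω, βLS ω = (S⁻¹ * Xᵀ).mulVec (y ω))
    (Fd : Matrix (Fin p) (Fin p) ℝ)
    (hFd : Fd = (S + 1)⁻¹ * (S + d • (1 : Matrix (Fin p) (Fin p) ℝ)))
    (βLT1 : Ω → Fin p → ℝ) (hLT1 : ∀ ω, βLT1 ω = Fd.mulVec (βLS ω))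
    (βSRL : Ω → Fin p → ℝ)
    (hSRL : ∀ ω, βSRL ω = βLT1 ω +
      v • (S⁻¹ * Rᵀ * (Om + v • (R * S⁻¹ * Rᵀ))⁻¹).mulVec (r ω - R.mulVec (βLT1 ω)))
    (A : Matrix (Fin p) (Fin p) ℝ) (hA : A = (S + v • (Rᵀ * Om⁻¹ * R))⁻¹) :
    vcov μ βSRL = σ ^ 2 • (A * (Fd * S * Fdᵀ + v ^ 2 • (Rᵀ * Om⁻¹ * R)) * A) := by
  have hOmU : IsUnit Om.det := (isUnit_iff_isUnit_det Om).1 hOm.isUnit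
  have hOmisymm : Om⁻¹.IsSymm :=
    IsSymm.inv ((conjTranspose_eq_transpose_of_trivial Om).symm.trans hOm.isHermitian.eq)
  have hAsymm : A.IsSymm := by
    rw [hA, IsSymm, transpose_nonsing_inv, transpose_add, transpose_smul,
      (hOmisymm.transpose_mul_mul R).eq, hS, transpose_mul, transpose_transpose]
  have hAFd : A * S * Fd * S⁻¹ * Xᵀ = A * Fd * Xᵀ := by
    rw [Matrix.mul_assoc A, (hFd ▸ commute_inv_add_one_mul_add_smul_one S d : Commute S Fd).eq,
      ← Matrix.mul_assoc, mul_nonsing_inv_cancel_right _ _ hSinv]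
  have hβSRL : βSRL = fun ω => (A * S * Fd + v • (A * Rᵀ * Om⁻¹ * R)) *ᵥ β +
      (A * Fd * Xᵀ) *ᵥ ε ω + (v • (A * Rᵀ * Om⁻¹)) *ᵥ e ω := by
    funext ω
    rw [hSRL, add_smul_mulVec_sub_mulVec _ _ _ hSinv hOmU hAinv hBinv, ← hA, hr, hLT1, hβLS, hy]
    have hSX : S⁻¹ * Xᵀ * X = 1 := by rw [Matrix.mul_assoc, ← hS, nonsing_inv_mul _ hSinv]
    simp only [mulVec_add, add_mulVec, mulVec_mulVec, ← Matrix.mul_assoc, hSX, Matrix.mul_one,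
      hAFd, Matrix.smul_mul]
    abel
  rw [hβSRL, vcov_const_add_mulVec_add_mulVec_of_indepFun _ _ _ hεint heint hindep, hεcov, hecov]
  simp only [transpose_mul, transpose_smul, transpose_transpose, hAsymm.eq, hOmisymm.eq,
    Matrix.smul_mul, Matrix.mul_smul, Matrix.mul_one, smul_smul, Matrix.mul_add, Matrix.add_mul,
    smul_add, Matrix.mul_assoc, nonsing_inv_mul_cancel_left _ _ hOmU, hS]
  rw [show v * (σ ^ 2 * v) = σ ^ 2 * v ^ 2 by ring]

theorem stmt9 {N p j : ℕ} {Ω : Type*} [MeasurableSpace Ω] (μ : Measure Ω) [IsProbabilityMeasure μ]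
    (X : Matrix (Fin N) (Fin p) ℝ) (R : Matrix (Fin j) (Fin p) ℝ)
    (Om : Matrix (Fin j) (Fin j) ℝ) (β : Fin p → ℝ) (σ v d : ℝ)
    (hv : 0 < v) (hOm : Om.PosDef)
    (ε : Ω → Fin N → ℝ) (e : Ω → Fin j → ℝ)
    (hεint : ∀ i, MemLp (fun ω => ε ω i) 2 μ) (heint : ∀ i, MemLp (fun ω => e ω i) 2 μ)
    (hεmean : vmean μ ε = 0) (hεcov : vcov μ ε = σ ^ 2 • (1 : Matrix (Fin N) (Fin N) ℝ))
    (hemean : vmean μ e = 0) (hecov : vcov μ e = σ ^ 2 • Om)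
    (hindep : ProbabilityTheory.IndepFun ε e μ)
    (S : Matrix (Fin p) (Fin p) ℝ) (hS : S = Xᵀ * X) (hSinv : IsUnit S.det)
    (hS1 : IsUnit (S + 1).det)
    (hAinv : IsUnit (S + v • (Rᵀ * Om⁻¹ * R)).det)
    (hBinv : IsUnit (Om + v • (R * S⁻¹ * Rᵀ)).det)
    (y : Ω → Fin N → ℝ) (hy : ∀ ω, y ω = X.mulVec β + ε ω)
    (r : Ω → Fin j → ℝ) (hr : ∀ ω, r ω = R.mulVec β + e ω)
    (βLS : Ω → Fin p → ℝ) (hβLS : ∀ ω, βLS ω = (S⁻¹ * Xᵀ).mulVec (y ω))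
    (Fd : Matrix (Fin p) (Fin p) ℝ)
    (hFd : Fd = (S + 1)⁻¹ * (S + d • (1 : Matrix (Fin p) (Fin p) ℝ)))
    (βLT1 : Ω → Fin p → ℝ) (hLT1 : ∀ ω, βLT1 ω = Fd.mulVec (βLS ω))
    (βSRL : Ω → Fin p → ℝ)
    (hSRL : ∀ ω, βSRL ω = βLT1 ω +
      v • (S⁻¹ * Rᵀ * (Om + v • (R * S⁻¹ * Rᵀ))⁻¹).mulVec (r ω - R.mulVec (βLT1 ω)))
    (A : Matrix (Fin p) (Fin p) ℝ) (hA : A = (S + v • (Rᵀ * Om⁻¹ * R))⁻¹) :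
    vcov μ βSRL = σ ^ 2 • (A * (Fd * S * Fdᵀ + v ^ 2 • (Rᵀ * Om⁻¹ * R)) * A) :=
  stmt9_general μ X R Om β σ v d hOm ε e hεint heint hεcov hecov hindep S hS hSinv hAinv hBinv y hy
    r hr βLS hβLS Fd hFd βLT1 hLT1 βSRL hSRL A hA
end

section
/- The stochastic restricted ridge estimator β̂_SRR = β̂_R + vS⁻¹Rᵀ(Ω + vRS⁻¹Rᵀ)⁻¹(r − R β̂_R), with β̂_R = (I + kS⁻¹)⁻¹S⁻¹Xᵀy = W β̂_LS, admits the closed form β̂_SRR = (S + vRᵀΩ⁻¹R)⁻¹(W Xᵀy + vRᵀΩ⁻¹r), where W = (I + kS⁻¹)⁻¹. -/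
/-!
Put `A = S + v RᵀΩ⁻¹R` and `B = Ω + v RS⁻¹Rᵀ`. The push-through identity
`A S⁻¹Rᵀ = RᵀΩ⁻¹ B` gives `A S⁻¹RᵀB⁻¹ = RᵀΩ⁻¹`, and since `S` commutes with
`W = (I + kS⁻¹)⁻¹` we get `S β̂_R = W Xᵀy`. Hence
`A β̂_SRR = S β̂_R + v RᵀΩ⁻¹R β̂_R + v RᵀΩ⁻¹(r − R β̂_R) = W Xᵀy + v RᵀΩ⁻¹r`.
-/

open Matrix

namespace Matrix

variable {m n α : Type*} [Fintype m] [Fintype n] [DecidableEq m] [DecidableEq n] [CommRing α]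

theorem push_through_add_smul (S : Matrix n n α) (Ω : Matrix m m α) (U : Matrix n m α)
    (V : Matrix m n α) (c : α) (hS : IsUnit S.det) (hΩ : IsUnit Ω.det) :
    (S + c • (U * Ω⁻¹ * V)) * (S⁻¹ * U) = U * Ω⁻¹ * (Ω + c • (V * S⁻¹ * U)) := by
  simp only [Matrix.add_mul, Matrix.mul_add, Matrix.smul_mul, Matrix.mul_smul, Matrix.mul_assoc,
    mul_nonsing_inv_cancel_left _ _ hS, nonsing_inv_mul _ hΩ, Matrix.mul_one]

theorem push_through_add_smul_inv (S : Matrix n n α) (Ω : Matrix m m α) (U : Matrix n m α)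
    (V : Matrix m n α) (c : α) (hS : IsUnit S.det) (hΩ : IsUnit Ω.det)
    (hB : IsUnit (Ω + c • (V * S⁻¹ * U)).det) :
    (S + c • (U * Ω⁻¹ * V)) * (S⁻¹ * U * (Ω + c • (V * S⁻¹ * U))⁻¹) = U * Ω⁻¹ := by
  rw [← Matrix.mul_assoc, push_through_add_smul S Ω U V c hS hΩ,
    mul_nonsing_inv_cancel_right _ _ hB]

theorem commute_inv_one_add_smul_inv (S : Matrix n n α) (k : α) (hS : IsUnit S.det) :
    Commute S (1 + k • S⁻¹)⁻¹ := by
  have h : Commute S⁻¹ (1 + k • S⁻¹) :=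
    (Commute.one_right _).add_right ((Commute.refl _).smul_right k)
  have h' := h.ringInverse_ringInverse
  rwa [← nonsing_inv_eq_ringInverse, ← nonsing_inv_eq_ringInverse,
    nonsing_inv_nonsing_inv S hS] at h'

end Matrix

theorem stmt13_general {N p j : ℕ} (X : Matrix (Fin N) (Fin p) ℝ) (y : Fin N → ℝ)
    (R : Matrix (Fin j) (Fin p) ℝ) (Om : Matrix (Fin j) (Fin j) ℝ) (r : Fin j → ℝ)
    (v k : ℝ)
    (S : Matrix (Fin p) (Fin p) ℝ) (hSinv : IsUnit S.det)
    (hOm : IsUnit Om.det)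
    (hAinv : IsUnit (S + v • (Rᵀ * Om⁻¹ * R)).det)
    (hBinv : IsUnit (Om + v • (R * S⁻¹ * Rᵀ)).det)
    (W : Matrix (Fin p) (Fin p) ℝ) (hW : W = (1 + k • S⁻¹)⁻¹)
    (βLS : Fin p → ℝ) (hβLS : βLS = (S⁻¹ * Xᵀ).mulVec y)
    (βR : Fin p → ℝ) (hβR : βR = W.mulVec βLS)
    (βSRR : Fin p → ℝ)
    (hSRR : βSRR = βR +
      v • (S⁻¹ * Rᵀ * (Om + v • (R * S⁻¹ * Rᵀ))⁻¹).mulVec (r - R.mulVec βR)) :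
    βSRR = ((S + v • (Rᵀ * Om⁻¹ * R))⁻¹).mulVec
      ((W * Xᵀ).mulVec y + v • (Rᵀ * Om⁻¹).mulVec r) := by
  set A := S + v • (Rᵀ * Om⁻¹ * R)
  have hSβR : S *ᵥ βR = (W * Xᵀ) *ᵥ y := by
    rw [hβR, hβLS, mulVec_mulVec, mulVec_mulVec, ← Matrix.mul_assoc,
      hW, (commute_inv_one_add_smul_inv S k hSinv).eq, Matrix.mul_assoc _ S,
      mul_nonsing_inv _ hSinv, Matrix.mul_one]
  have hAβSRR : A *ᵥ βSRR = (W * Xᵀ) *ᵥ y + v • (Rᵀ * Om⁻¹) *ᵥ r := by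
    rw [hSRR, mulVec_add, mulVec_smul, mulVec_mulVec,
      push_through_add_smul_inv S Om Rᵀ R v hSinv hOm hBinv, add_mulVec, hSβR,
      smul_mulVec, ← mulVec_mulVec βR (Rᵀ * Om⁻¹) R, mulVec_sub, smul_sub]
    abel
  let := invertibleOfIsUnitDet A hAinv
  exact (inv_mulVec_eq_vec hAβSRR.symm).symm

theorem stmt13 {N p j : ℕ} (X : Matrix (Fin N) (Fin p) ℝ) (y : Fin N → ℝ)
    (R : Matrix (Fin j) (Fin p) ℝ) (Om : Matrix (Fin j) (Fin j) ℝ) (r : Fin j → ℝ)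
    (v k : ℝ) (hv : 0 < v) (hk : 0 < k)
    (S : Matrix (Fin p) (Fin p) ℝ) (hS : S = Xᵀ * X) (hSinv : IsUnit S.det)
    (hWinv : IsUnit (1 + k • S⁻¹).det) (hOm : IsUnit Om.det)
    (hAinv : IsUnit (S + v • (Rᵀ * Om⁻¹ * R)).det)
    (hBinv : IsUnit (Om + v • (R * S⁻¹ * Rᵀ)).det)
    (W : Matrix (Fin p) (Fin p) ℝ) (hW : W = (1 + k • S⁻¹)⁻¹)
    (βLS : Fin p → ℝ) (hβLS : βLS = (S⁻¹ * Xᵀ).mulVec y)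
    (βR : Fin p → ℝ) (hβR : βR = W.mulVec βLS)
    (βSRR : Fin p → ℝ)
    (hSRR : βSRR = βR +
      v • (S⁻¹ * Rᵀ * (Om + v • (R * S⁻¹ * Rᵀ))⁻¹).mulVec (r - R.mulVec βR)) :
    βSRR = ((S + v • (Rᵀ * Om⁻¹ * R))⁻¹).mulVec
      ((W * Xᵀ).mulVec y + v • (Rᵀ * Om⁻¹).mulVec r) :=
  stmt13_general X y R Om r v k S hSinv hOm hAinv hBinv W hW βLS hβLS βR hβR βSRR hSRR
end
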